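/- arXiv:1704.01108 — 2 statements merged into one kernel-verified Lean document; each statement's English description precedes it below -/
import Mathlib

section
/- Define m_d := ∫₀^{π/2} θ^d · sin(2θ) dθ for natural numbers d. Then m_d · (2/π)^d · d² → π²/2 as d → ∞; that is, m_d ∼ (π²/(2d²)) · (π/2)^d for large d. -/
/-!
With `t = π / 2 - θ` we have `sin (2 * θ) = sin (2 * t)`, and `2 * t - (2 * t) ^ 3 / 6 ≤ sin (2 * t) ≤ 2 * t`.
The moments `∫₀^a θ ^ d * (a - θ) ^ k` are beta integrals `a ^ (d + k + 1) * d! * k! / (d + k + 1)!`,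
so the linear term contributes `2 * (π / 2) ^ (d + 2) / ((d + 1) * (d + 2)) ~ (π ^ 2 / 2) * (π / 2) ^ d / d ^ 2`,
while the cubic correction is smaller by a factor of order `1 / d ^ 2`.
-/

open Real MeasureTheory Filter Topology

lemma integral_pow_mul_sub (a : ℝ) (d : ℕ) :
    ∫ θ in (0 : ℝ)..a, θ ^ d * (a - θ) = a ^ (d + 2) / ((d + 1) * (d + 2)) := by
  have h : ∀ θ : ℝ, θ ^ d * (a - θ) = a * θ ^ d - θ ^ (d + 1) := fun θ => by ring
  simp_rw [h]
  rw [intervalIntegral.integral_sub (Continuous.intervalIntegrable (by fun_prop) _ _)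
      (Continuous.intervalIntegrable (by fun_prop) _ _),
    intervalIntegral.integral_const_mul, integral_pow, integral_pow]
  field_simp
  push_cast
  ring

lemma integral_pow_mul_sub_pow_three (a : ℝ) (d : ℕ) :
    ∫ θ in (0 : ℝ)..a, θ ^ d * (a - θ) ^ 3 =
      6 * a ^ (d + 4) / ((d + 1) * (d + 2) * (d + 3) * (d + 4)) := by
  have h : ∀ θ : ℝ, θ ^ d * (a - θ) ^ 3 =
      a ^ 3 * θ ^ d - 3 * a ^ 2 * θ ^ (d + 1) + (3 * a * θ ^ (d + 2) - θ ^ (d + 3)) :=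
    fun θ => by ring
  simp_rw [h]
  rw [intervalIntegral.integral_add (Continuous.intervalIntegrable (by fun_prop) _ _)
      (Continuous.intervalIntegrable (by fun_prop) _ _),
    intervalIntegral.integral_sub (Continuous.intervalIntegrable (by fun_prop) _ _)
      (Continuous.intervalIntegrable (by fun_prop) _ _),
    intervalIntegral.integral_sub (Continuous.intervalIntegrable (by fun_prop) _ _)
      (Continuous.intervalIntegrable (by fun_prop) _ _)]
  simp only [intervalIntegral.integral_const_mul, integral_pow]
  field_simp
  push_cast
  ring

lemma sin_two_mul_le_of_le_pi_div_two {θ : ℝ} (hθ : θ ≤ π / 2) :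
    sin (2 * θ) ≤ 2 * (π / 2 - θ) := by
  rw [← sin_pi_sub]
  convert sin_le (x := π - 2 * θ) (by linarith) using 1
  ring

lemma le_sin_two_mul_of_le_pi_div_two {θ : ℝ} (hθ : θ ≤ π / 2) :
    2 * (π / 2 - θ) - 4 / 3 * (π / 2 - θ) ^ 3 ≤ sin (2 * θ) := by
  rw [← sin_pi_sub]
  convert sin_ge_sub_cube (x := π - 2 * θ) (by linarith) using 1
  ring

lemma integral_pow_mul_sin_two_mul_le (d : ℕ) :
    ∫ θ in (0 : ℝ)..π / 2, θ ^ d * sin (2 * θ) ≤ 2 * ((π / 2) ^ (d + 2) / ((d + 1) * (d + 2))) :=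
  calc ∫ θ in (0 : ℝ)..π / 2, θ ^ d * sin (2 * θ)
      ≤ ∫ θ in (0 : ℝ)..π / 2, 2 * (θ ^ d * (π / 2 - θ)) := by
        refine intervalIntegral.integral_mono_on (by positivity)
          (Continuous.intervalIntegrable (by fun_prop) _ _)
          (Continuous.intervalIntegrable (by fun_prop) _ _) fun θ hθ => ?_
        rw [mul_left_comm]
        exact mul_le_mul_of_nonneg_left (sin_two_mul_le_of_le_pi_div_two hθ.2) (pow_nonneg hθ.1 d)
    _ = _ := by rw [intervalIntegral.integral_const_mul, integral_pow_mul_sub]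

lemma le_integral_pow_mul_sin_two_mul (d : ℕ) :
    2 * ((π / 2) ^ (d + 2) / ((d + 1) * (d + 2))) -
        4 / 3 * (6 * (π / 2) ^ (d + 4) / ((d + 1) * (d + 2) * (d + 3) * (d + 4))) ≤
      ∫ θ in (0 : ℝ)..π / 2, θ ^ d * sin (2 * θ) :=
  calc _ = ∫ θ in (0 : ℝ)..π / 2, θ ^ d * (2 * (π / 2 - θ) - 4 / 3 * (π / 2 - θ) ^ 3) := by
        rw [← integral_pow_mul_sub, ← integral_pow_mul_sub_pow_three,
          ← intervalIntegral.integral_const_mul, ← intervalIntegral.integral_const_mul,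
          ← intervalIntegral.integral_sub (Continuous.intervalIntegrable (by fun_prop) _ _)
            (Continuous.intervalIntegrable (by fun_prop) _ _)]
        congr 1 with θ
        ring
    _ ≤ _ := by
        refine intervalIntegral.integral_mono_on (by positivity)
          (Continuous.intervalIntegrable (by fun_prop) _ _)
          (Continuous.intervalIntegrable (by fun_prop) _ _) fun θ hθ => ?_
        exact mul_le_mul_of_nonneg_left (le_sin_two_mul_of_le_pi_div_two hθ.2) (pow_nonneg hθ.1 d)

lemma tendsto_natCast_sq_div_add_mul_add (a b : ℝ) :
    Tendsto (fun n : ℕ => (n : ℝ) ^ 2 / ((n + a) * (n + b))) atTop (𝓝 1) := by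
  simpa [sq, mul_div_mul_comm] using
    (tendsto_natCast_div_add_atTop a).mul (tendsto_natCast_div_add_atTop b)

lemma tendsto_natCast_sq_div_add_mul_add_mul_add_mul_add (a b c e : ℝ) :
    Tendsto (fun n : ℕ => (n : ℝ) ^ 2 / ((n + a) * (n + b) * (n + c) * (n + e))) atTop (𝓝 0) := by
  have hc := tendsto_inv_atTop_zero.comp
    (tendsto_atTop_add_const_right _ c tendsto_natCast_atTop_atTop)
  have he := tendsto_inv_atTop_zero.comp
    (tendsto_atTop_add_const_right _ e tendsto_natCast_atTop_atTop)
  convert (tendsto_natCast_sq_div_add_mul_add a b).mul (hc.mul he) using 2 with n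
  · simp only [Function.comp_apply, div_eq_mul_inv, mul_inv]
    ring
  · simp

theorem stmt_2 :
    Filter.Tendsto
      (fun d : ℕ => (∫ θ in (0 : ℝ)..(π / 2), θ ^ d * Real.sin (2 * θ)) * (2 / π) ^ d * (d : ℝ) ^ 2)
      Filter.atTop (nhds (π ^ 2 / 2)) := by
  have hmain := (tendsto_natCast_sq_div_add_mul_add 1 2).const_mul (π ^ 2 / 2)
  have herror := (tendsto_natCast_sq_div_add_mul_add_mul_add_mul_add 1 2 3 4).const_mul (π ^ 4 / 2)
  refine tendsto_of_tendsto_of_tendsto_of_le_of_le (by simpa using hmain.sub herror)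
    (by simpa using hmain) (fun d => ?_) (fun d => ?_)
  · calc _ = (2 * ((π / 2) ^ (d + 2) / ((d + 1) * (d + 2))) -
            4 / 3 * (6 * (π / 2) ^ (d + 4) / ((d + 1) * (d + 2) * (d + 3) * (d + 4)))) *
            (2 / π) ^ d * (d : ℝ) ^ 2 := by
          simp only [div_pow]
          field_simp
          ring
      _ ≤ _ := by gcongr; exact le_integral_pow_mul_sin_two_mul d
  · calc _ ≤ 2 * ((π / 2) ^ (d + 2) / ((d + 1) * (d + 2))) * (2 / π) ^ d * (d : ℝ) ^ 2 := by
          gcongr; exact integral_pow_mul_sin_two_mul_le d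
      _ = _ := by
          simp only [div_pow]
          field_simp
          ring
end

section
/- Let d ≥ 1 be a natural number, c > 0, and let V : (0, ∞) → ℝ be nonnegative and nondecreasing with V(r)/r^d → c as r → 0⁺. Then λ^{d/2} · ∫₀^{π/2} V(θ/√λ) sin(2θ) dθ → c · m_d as λ → ∞, where m_d = ∫₀^{π/2} θ^d sin(2θ) dθ. -/
open Real MeasureTheory Filter

theorem stmt_17 (d : ℕ) (hd : 1 ≤ d) (c : ℝ) (hc : 0 < c) (V : ℝ → ℝ)
    (hV_nonneg : ∀ r ∈ Set.Ioi (0 : ℝ), 0 ≤ V r)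
    (hV_mono : MonotoneOn V (Set.Ioi (0 : ℝ)))
    (hV_asymp : Filter.Tendsto (fun r => V r / r ^ d)
      (nhdsWithin 0 (Set.Ioi (0 : ℝ))) (nhds c)) :
    Filter.Tendsto
      (fun lam : ℝ =>
        lam ^ ((d : ℝ) / 2) * ∫ θ in (0 : ℝ)..(π / 2), V (θ / Real.sqrt lam) * Real.sin (2 * θ))
      Filter.atTop
      (nhds (c * ∫ θ in (0 : ℝ)..(π / 2), θ ^ d * Real.sin (2 * θ))) := by
  have hπ : (0:ℝ) ≤ π / 2 := by positivity
  set g : ℝ → ℝ := fun r => if 0 < r then V r else 0 with hg_def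
  have hg_eq : ∀ r : ℝ, 0 < r → g r = V r := fun r hr => if_pos hr
  have hg_nonneg : ∀ r : ℝ, 0 ≤ g r := by
    intro r
    by_cases hr : 0 < r
    · rw [hg_eq r hr]; exact hV_nonneg r hr
    · simp [hg_def, hr]
  have hg_mono : Monotone g := by
    intro r s hrs
    by_cases hr : 0 < r
    · have hs : 0 < s := lt_of_lt_of_le hr hrs
      rw [hg_eq r hr, hg_eq s hs]
      exact hV_mono hr hs hrs
    · have : g r = 0 := by simp [hg_def, hr]
      rw [this]; exact hg_nonneg s
  have hg_meas : Measurable g := hg_mono.measurable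
  have hg_asymp : Tendsto (fun r => g r / r ^ d) (nhdsWithin 0 (Set.Ioi 0)) (nhds c) := by
    refine hV_asymp.congr' ?_
    filter_upwards [self_mem_nhdsWithin] with r hr
    rw [hg_eq r hr]
  obtain ⟨δ, hδ0, hδ⟩ : ∃ δ > 0, ∀ r : ℝ, 0 < r → r < δ → g r ≤ (c + 1) * r ^ d := by
    have h := hg_asymp.eventually_lt_const (by linarith : c < c + 1)
    obtain ⟨δ, hδ0, h⟩ := Metric.mem_nhdsWithin_iff.mp h
    refine ⟨δ, hδ0, fun r hr hrδ => ?_⟩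
    have hdist : r ∈ Metric.ball (0:ℝ) δ ∩ Set.Ioi 0 := by
      refine ⟨?_, hr⟩
      rw [Metric.mem_ball, Real.dist_eq, sub_zero, abs_of_pos hr]; exact hrδ
    have := h hdist
    have hrd : (0:ℝ) < r ^ d := pow_pos hr d
    exact le_of_lt ((div_lt_iff₀ hrd).mp this)
  have hsqrt : Tendsto Real.sqrt atTop atTop := by
    refine (tendsto_rpow_atTop (by norm_num : (0:ℝ) < 1/2)).congr' ?_
    filter_upwards [eventually_ge_atTop (0:ℝ)] with x hx
    exact (Real.sqrt_eq_rpow x).symm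
  have hrpow : ∀ lam : ℝ, 0 ≤ lam → lam ^ ((d : ℝ) / 2) = (Real.sqrt lam) ^ d := by
    intro lam hlam
    rw [Real.sqrt_eq_rpow, ← Real.rpow_natCast (lam ^ ((1:ℝ)/2)) d, ← Real.rpow_mul hlam]
    ring_nf
  set F : ℝ → ℝ → ℝ := fun lam θ => lam ^ ((d : ℝ) / 2) * (g (θ / Real.sqrt lam) * Real.sin (2 * θ)) with hF_def
  have key : Tendsto (fun lam => ∫ θ in Set.Ioc (0:ℝ) (π/2), F lam θ) atTop
      (nhds (∫ θ in Set.Ioc (0:ℝ) (π/2), c * (θ ^ d * Real.sin (2 * θ)))) := by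
    refine tendsto_integral_filter_of_dominated_convergence (fun θ => (c + 1) * θ ^ d)
      ?_ ?_ ?_ ?_
    · refine Eventually.of_forall fun lam => ?_
      exact ((measurable_const.mul
        ((hg_meas.comp (measurable_id.div_const _)).mul
          (Real.measurable_sin.comp (measurable_const.mul measurable_id)))).aestronglyMeasurable)
    · filter_upwards [eventually_ge_atTop (max 1 ((π / (2 * δ)) ^ 2 + 1))] with lam hlam
      refine ae_restrict_of_forall_mem measurableSet_Ioc fun θ hθ => ?_
      have hlam1 : (1:ℝ) ≤ lam := le_trans (le_max_left _ _) hlam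
      have hlam0 : (0:ℝ) ≤ lam := by linarith
      have hs : 0 < Real.sqrt lam := Real.sqrt_pos.mpr (by linarith)
      have hsgt : π / (2 * δ) < Real.sqrt lam := by
        have h2 : (π / (2 * δ)) ^ 2 + 1 ≤ lam := le_trans (le_max_right _ _) hlam
        have hpd : (0:ℝ) ≤ π / (2 * δ) := by positivity
        rw [show Real.sqrt lam = Real.sqrt lam from rfl]
        exact (Real.lt_sqrt hpd).mpr (by nlinarith)
      have hθ0 : 0 < θ := hθ.1
      have hr0 : 0 < θ / Real.sqrt lam := div_pos hθ0 hs
      have hrδ : θ / Real.sqrt lam < δ := by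
        have h1 : θ / Real.sqrt lam ≤ (π/2) / Real.sqrt lam := by
          gcongr; exact hθ.2
        have h2 : (π/2) / Real.sqrt lam < δ := by
          rw [div_lt_iff₀ hs]
          calc π / 2 = δ * (π / (2 * δ)) := by field_simp
            _ < δ * Real.sqrt lam := by exact (mul_lt_mul_iff_right₀ hδ0).mpr hsgt
        linarith
      have hb := hδ _ hr0 hrδ
      have hsin : |Real.sin (2 * θ)| ≤ 1 := abs_le.mpr ⟨Real.neg_one_le_sin _, Real.sin_le_one _⟩
      have hF : ‖F lam θ‖ = (Real.sqrt lam) ^ d * (g (θ / Real.sqrt lam) * |Real.sin (2 * θ)|) := by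
        rw [hF_def]
        simp only [Real.norm_eq_abs]
        rw [hrpow lam hlam0, abs_mul, abs_mul,
          abs_of_nonneg (pow_nonneg (Real.sqrt_nonneg _) d),
          abs_of_nonneg (hg_nonneg _)]
      rw [hF]
      calc (Real.sqrt lam) ^ d * (g (θ / Real.sqrt lam) * |Real.sin (2 * θ)|)
          ≤ (Real.sqrt lam) ^ d * (((c + 1) * (θ / Real.sqrt lam) ^ d) * 1) := by
            have h0 : 0 ≤ (Real.sqrt lam) ^ d := pow_nonneg (Real.sqrt_nonneg _) d
            refine mul_le_mul_of_nonneg_left ?_ h0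
            exact mul_le_mul hb hsin (abs_nonneg _) (by positivity)
        _ = (c + 1) * θ ^ d := by
            rw [div_pow]
            field_simp
    · exact (continuous_const.mul (continuous_pow d)).integrableOn_Ioc
    · refine ae_restrict_of_forall_mem measurableSet_Ioc fun θ hθ => ?_
      have hθ0 : 0 < θ := hθ.1
      have hrt : Tendsto (fun lam => θ / Real.sqrt lam) atTop (nhdsWithin 0 (Set.Ioi 0)) := by
        rw [tendsto_nhdsWithin_iff]
        constructor
        · exact tendsto_const_nhds.div_atTop hsqrt
        · filter_upwards [eventually_ge_atTop (1:ℝ)] with lam hlam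
          exact div_pos hθ0 (Real.sqrt_pos.mpr (by linarith))
      have h1 : Tendsto (fun lam => g (θ / Real.sqrt lam) / (θ / Real.sqrt lam) ^ d
            * (θ ^ d * Real.sin (2 * θ))) atTop (nhds (c * (θ ^ d * Real.sin (2 * θ)))) :=
        (hg_asymp.comp hrt).mul_const _
      refine h1.congr' ?_
      filter_upwards [eventually_ge_atTop (1:ℝ)] with lam hlam
      have hs : 0 < Real.sqrt lam := Real.sqrt_pos.mpr (by linarith)
      rw [hF_def]
      simp only
      rw [hrpow lam (by linarith), div_pow]
      have hθd : (0:ℝ) < θ ^ d := pow_pos hθ0 d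
      have hsd : (0:ℝ) < (Real.sqrt lam) ^ d := pow_pos hs d
      field_simp
  have targ : c * ∫ θ in (0:ℝ)..(π/2), θ ^ d * Real.sin (2 * θ)
      = ∫ θ in Set.Ioc (0:ℝ) (π/2), c * (θ ^ d * Real.sin (2 * θ)) := by
    rw [intervalIntegral.integral_of_le hπ, ← MeasureTheory.integral_const_mul]
  rw [targ]
  refine key.congr' ?_
  filter_upwards [eventually_ge_atTop (1:ℝ)] with lam hlam
  have hs : 0 < Real.sqrt lam := Real.sqrt_pos.mpr (by linarith)
  rw [intervalIntegral.integral_of_le hπ, ← MeasureTheory.integral_const_mul]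
  refine (setIntegral_congr_fun measurableSet_Ioc fun θ hθ => ?_).symm
  rw [hF_def]
  simp only
  rw [hg_eq _ (div_pos hθ.1 hs)]
end
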